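/- For z ∈ ℝ^V with spread max(z) - min(z) ≤ s, the maximum softmax probability satisfies max_k softmax(z)_k ≤ e^s / (V - 1 + e^s). -/
import Mathlib


/-- If the spread `max(z) - min(z) ≤ s` (with `s ≥ 0`, `V ≥ 2`), then the
maximum softmax probability is at most `e^s / (V - 1 + e^s)`. -/
theorem spread_softmax_bound (V : ℕ) (hV : 2 ≤ V) (z : Fin V → ℝ) (s : ℝ) (hs : 0 ≤ s)
    (hspread : Finset.univ.sup' (Finset.univ_nonempty_iff.mpr ⟨⟨0, by omega⟩⟩) z
        - Finset.univ.inf' (Finset.univ_nonempty_iff.mpr ⟨⟨0, by omega⟩⟩) z ≤ s) :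
    Finset.univ.sup' (Finset.univ_nonempty_iff.mpr ⟨⟨0, by omega⟩⟩)
        (fun k => Real.exp (z k) / ∑ j, Real.exp (z j))
      ≤ Real.exp s / ((V : ℝ) - 1 + Real.exp s) := by
  have hne : (Finset.univ : Finset (Fin V)).Nonempty :=
    Finset.univ_nonempty_iff.mpr ⟨⟨0, by omega⟩⟩
  have hVR : (2:ℝ) ≤ (V:ℝ) := by exact_mod_cast hV
  apply Finset.sup'_le
  intro k _
  have hSpos : 0 < ∑ j, Real.exp (z j) :=
    Finset.sum_pos (fun j _ => Real.exp_pos _) hne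
  have hden : 0 < (V:ℝ) - 1 + Real.exp s := by
    have := Real.exp_pos s; linarith
  rw [div_le_div_iff₀ hSpos hden]
  have key : ∀ j, z k - z j ≤ s := by
    intro j
    have h1 : z k ≤ Finset.univ.sup' hne z := Finset.le_sup' z (Finset.mem_univ k)
    have h2 : Finset.univ.inf' hne z ≤ z j := Finset.inf'_le z (Finset.mem_univ j)
    linarith [hspread]
  have hsum : ((V:ℝ) - 1) * Real.exp (z k)
      ≤ ∑ j ∈ Finset.univ.erase k, Real.exp s * Real.exp (z j) := by
    have hle : ∑ _j ∈ Finset.univ.erase k, Real.exp (z k)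
        ≤ ∑ j ∈ Finset.univ.erase k, Real.exp s * Real.exp (z j) := by
      apply Finset.sum_le_sum
      intro j _
      rw [← Real.exp_add]
      exact Real.exp_le_exp.mpr (by linarith [key j])
    have hcard : (Finset.univ.erase k).card = V - 1 := by
      rw [Finset.card_erase_of_mem (Finset.mem_univ k)]
      simp
    rw [Finset.sum_const, hcard] at hle
    have : ((V - 1 : ℕ) : ℝ) = (V:ℝ) - 1 := by
      have : (1:ℕ) ≤ V := by omega
      push_cast [this]; ring
    rw [nsmul_eq_mul, this] at hle
    exact hle
  have hsplit : (∑ j ∈ Finset.univ.erase k, Real.exp (z j)) + Real.exp (z k)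
      = ∑ j, Real.exp (z j) := Finset.sum_erase_add _ _ (Finset.mem_univ k)
  have hmul : Real.exp s * ∑ j, Real.exp (z j)
      = (∑ j ∈ Finset.univ.erase k, Real.exp s * Real.exp (z j))
        + Real.exp s * Real.exp (z k) := by
    rw [← hsplit, mul_add, Finset.mul_sum]
  nlinarith [hsum, hmul]
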